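/- For every integer t ≥ 2 there exists an RkMed instance (F, C, d, k = 2, m = 4t + 1) for which every feasible integral solution has cost at least t + 1, while LP_basic admits a feasible fractional solution of value 2; hence the integrality gap of LP_basic for RkMed is at least (t + 1)/2, and thus unbounded. Concretely one may take F = {i₀, i₁, i₂}, C consisting of 2t clients collocated with i₀, 2t clients collocated with i₁, and t clients collocated with i₂, with d(i₀, i₁) = 1 and all distances between points on the {i₀, i₁} side and points on the {i₂} side equal to D = t + 2; the fractional solution opens i₀ fully, i₁ to extent 1 − 1/t, and i₂ to extent 1/t. -/

import Mathlib

/-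
Put the three facilities on the real line at `0`, `1` and `t + 2`, with `2t`, `2t` and `t` clients
at them. An integral solution opens at most two facilities, so some site `s` is closed. As it
serves all but at most `t - 1` of the `5t` clients, it serves at least `n_s + 1 - t` of the `n_s`
clients at `s`, each at distance at least the gap from `s` to the nearest other site: this costs
`(t + 1) * 1` if `s` is one of the first two sites and `1 * (t + 1)` if it is the third.
The fractional solution opens the sites to extents `1`, `1 - 1/t`, `1/t`; only the clients at the
second site pay, each sending `1/t` to the first site at distance `1`.
-/

open Finset

/-- `dmin d p S` is the distance from the point `p` to the (nonempty) set `S`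
under the pseudometric `d`, i.e. `min_{i ∈ S} d p i`. -/
noncomputable def dmin {α : Type*} (d : α → α → ℝ) (p : α) (S : Finset α) : ℝ :=
  sInf ((fun i => d p i) '' (S : Set α))

theorem le_dmin {α : Type*} {d : α → α → ℝ} {p : α} {S : Finset α} (hS : S.Nonempty) {c : ℝ}
    (h : ∀ i ∈ S, c ≤ d p i) : c ≤ dmin d p S := by
  obtain ⟨i₀, hi₀⟩ := hS
  exact le_csInf ⟨d p i₀, i₀, hi₀, rfl⟩ (by rintro _ ⟨i, hi, rfl⟩; exact h i hi)

theorem dmin_nonneg {α : Type*} {d : α → α → ℝ} {p : α} {S : Finset α}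
    (h : ∀ i ∈ S, 0 ≤ d p i) : 0 ≤ dmin d p S :=
  Real.sInf_nonneg (by rintro _ ⟨i, hi, rfl⟩; exact h i hi)

theorem Finset.card_add_card_le_card_inter_add {α : Type*} [DecidableEq α] {A B C : Finset α}
    (hA : A ⊆ C) (hB : B ⊆ C) : #A + #B ≤ #(A ∩ B) + #C := by
  rw [← card_union_add_card_inter, add_comm]
  exact Nat.add_le_add_left (card_le_card (union_subset hA hB)) _

theorem Finset.mul_card_inter_le_sum {ι : Type*} [DecidableEq ι] {f : ι → ℝ} {A B : Finset ι}
    {c : ℝ} (hA : ∀ i ∈ A, 0 ≤ f i) (hB : ∀ i ∈ B, c ≤ f i) : c * #(A ∩ B) ≤ ∑ i ∈ A, f i :=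
  calc c * #(A ∩ B) ≤ ∑ i ∈ A ∩ B, f i := by
        rw [mul_comm, ← nsmul_eq_mul]
        exact card_nsmul_le_sum _ _ _ fun i hi => hB i (mem_inter.1 hi).2
    _ ≤ ∑ i ∈ A, f i := sum_le_sum_of_subset_of_nonneg inter_subset_left fun i hi _ => hA i hi

namespace RkMedGap

/- A facility is its site; a client is a site together with an index telling apart the clients
collocated there. -/
abbrev Point : Type := Fin 3 ⊕ (Σ _ : Fin 3, ℕ)

def site : Point → Fin 3
  | .inl s => s
  | .inr j => j.1

noncomputable def pos (t : ℕ) : Fin 3 → ℝ := ![0, 1, t + 2]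

noncomputable def lineDist (t : ℕ) (p q : Point) : ℝ := |pos t (site p) - pos t (site q)|

def mult (t : ℕ) : Fin 3 → ℕ := ![2 * t, 2 * t, t]

def facilities : Finset Point := univ.map .inl

def clients (t : ℕ) (T : Finset (Fin 3)) : Finset Point :=
  (T.sigma fun s => range (mult t s)).map .inr

variable {t : ℕ}

theorem pos_injective : Function.Injective (pos t) := by
  intro a b h
  fin_cases a <;> fin_cases b <;> simp [pos] at h ⊢ <;> linarith

theorem card_facilities : #facilities = 3 := by simp [facilities]

theorem card_clients (T : Finset (Fin 3)) : #(clients t T) = ∑ s ∈ T, mult t s := by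
  simp [clients]

theorem card_clients_univ : #(clients t univ) = 5 * t := by
  rw [card_clients, Fin.sum_univ_three]; simp [mult]; ring

theorem clients_mono {T T' : Finset (Fin 3)} (h : T ⊆ T') : clients t T ⊆ clients t T' :=
  map_subset_map.2 (sigma_mono h fun _ => subset_rfl)

theorem sum_facilities (g : Fin 3 → ℝ) : ∑ i ∈ facilities, g (site i) = ∑ s, g s := by
  simp [facilities, site]

theorem sum_facilities_clients (g : Fin 3 → Fin 3 → ℝ) :
    ∑ i ∈ facilities, ∑ j ∈ clients t univ, g (site i) (site j) =
      ∑ s, ∑ s', (mult t s' : ℝ) * g s s' := by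
  simp [facilities, clients, sum_sigma, site]

noncomputable def gap (t : ℕ) : Fin 3 → ℝ := ![1, 1, t + 1]

theorem gap_nonneg {s : Fin 3} : 0 ≤ gap t s := by
  fin_cases s <;> simp [gap]; positivity

theorem gap_le_abs_pos_sub {s s' : Fin 3} (h : s ≠ s') : gap t s ≤ |pos t s - pos t s'| := by
  fin_cases s <;> fin_cases s' <;> simp [gap, pos, le_abs] at h ⊢ <;>
    first | (left; linarith) | (right; linarith)

theorem exists_closed_site {S : Finset Point} (hcard : #S ≤ 2) : ∃ s, .inl s ∉ S := by
  obtain ⟨i, hi, hiS⟩ := exists_mem_notMem_of_card_lt_card (s := S) (t := facilities)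
    (by rw [card_facilities]; omega)
  obtain ⟨s, -, rfl⟩ := mem_map.1 hi
  exact ⟨s, hiS⟩

theorem le_dmin_of_closed {S : Finset Point} (hS : S ⊆ facilities) (hne : S.Nonempty) {s : Fin 3}
    (hs : .inl s ∉ S) {c : ℝ} (hc : ∀ s' ≠ s, c ≤ |pos t s - pos t s'|) :
    ∀ j ∈ clients t {s}, c ≤ dmin (lineDist t) j S := by
  intro j hj
  obtain ⟨⟨s₀, n⟩, hn, rfl⟩ := mem_map.1 hj
  obtain rfl : s₀ = s := by simpa using (mem_sigma.1 hn).1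
  refine le_dmin hne fun i hi => ?_
  obtain ⟨s', -, rfl⟩ := mem_map.1 (hS hi)
  exact hc s' (by rintro rfl; exact hs hi)

theorem mul_le_cost_of_closed {S Cs : Finset Point} (hS : S ⊆ facilities) (hne : S.Nonempty)
    {s : Fin 3} (hs : .inl s ∉ S) (hCs : Cs ⊆ clients t univ) (hm : 4 * t + 1 ≤ #Cs) :
    gap t s * ((mult t s : ℝ) + 1 - t) ≤ ∑ j ∈ Cs, dmin (lineDist t) j S := by
  have hcount := card_add_card_le_card_inter_add hCs (clients_mono (subset_univ {s}))
  rw [card_clients, sum_singleton, card_clients_univ] at hcount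
  have hcount' : (mult t s : ℝ) + 1 - t ≤ #(Cs ∩ clients t {s}) := by
    rw [sub_le_iff_le_add]; exact_mod_cast (by omega : mult t s + 1 ≤ #(Cs ∩ clients t {s}) + t)
  calc gap t s * ((mult t s : ℝ) + 1 - t) ≤ gap t s * #(Cs ∩ clients t {s}) :=
        mul_le_mul_of_nonneg_left hcount' gap_nonneg
    _ ≤ ∑ j ∈ Cs, dmin (lineDist t) j S :=
        mul_card_inter_le_sum (fun j _ => dmin_nonneg fun i _ => abs_nonneg _)
          (le_dmin_of_closed hS hne hs fun s' hs' => gap_le_abs_pos_sub hs'.symm)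

theorem add_one_le_integral_cost {S Cs : Finset Point} (hS : S ⊆ facilities) (hne : S.Nonempty)
    (hk : #S ≤ 2) (hCs : Cs ⊆ clients t univ) (hm : 4 * t + 1 ≤ #Cs) :
    (t : ℝ) + 1 ≤ ∑ j ∈ Cs, dmin (lineDist t) j S := by
  obtain ⟨s, hs⟩ := exists_closed_site hk
  calc (t : ℝ) + 1 = gap t s * ((mult t s : ℝ) + 1 - t) := by
        fin_cases s <;> simp [gap, mult] <;> ring
    _ ≤ _ := mul_le_cost_of_closed hS hne hs hCs hm

theorem facilities_disjoint_clients (T : Finset (Fin 3)) : Disjoint facilities (clients t T) :=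
  disjoint_map_inl_map_inr _ _

theorem lineDist_pos {i i' : Point} (hi : i ∈ facilities) (hi' : i' ∈ facilities) (h : i ≠ i') :
    0 < lineDist t i i' := by
  obtain ⟨s, -, rfl⟩ := mem_map.1 hi
  obtain ⟨s', -, rfl⟩ := mem_map.1 hi'
  exact abs_sub_pos.2 (pos_injective.ne fun hs => h (by simpa [site] using hs))

/- Rows are facility sites, columns client sites. -/
noncomputable def xFrac (t : ℕ) : Fin 3 → Fin 3 → ℝ :=
  ![![1, (t : ℝ)⁻¹, 0], ![0, 1 - (t : ℝ)⁻¹, 0], ![0, 0, (t : ℝ)⁻¹]]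

noncomputable def yFrac (t : ℕ) : Fin 3 → ℝ := ![1, 1 - (t : ℝ)⁻¹, (t : ℝ)⁻¹]

theorem xFrac_nonneg (s s' : Fin 3) : 0 ≤ xFrac t s s' := by
  fin_cases s <;> fin_cases s' <;> simp [xFrac, Nat.cast_inv_le_one]

theorem yFrac_nonneg (s : Fin 3) : 0 ≤ yFrac t s := by
  fin_cases s <;> simp [yFrac, Nat.cast_inv_le_one]

theorem xFrac_le_yFrac (s s' : Fin 3) : xFrac t s s' ≤ yFrac t s := by
  fin_cases s <;> fin_cases s' <;> simp [xFrac, yFrac, Nat.cast_inv_le_one]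

theorem sum_xFrac_le_one (s' : Fin 3) : ∑ s, xFrac t s s' ≤ 1 := by
  fin_cases s' <;> simp [Fin.sum_univ_three, xFrac, Nat.cast_inv_le_one]

theorem sum_yFrac : ∑ s, yFrac t s = 2 := by
  simp [Fin.sum_univ_three, yFrac]; ring

theorem sum_xFrac_mass (ht : t ≠ 0) :
    ∑ s, ∑ s', (mult t s' : ℝ) * xFrac t s s' = 4 * t + 1 := by
  simp [Fin.sum_univ_three, xFrac, mult]
  field_simp
  ring

theorem sum_xFrac_cost (ht : t ≠ 0) :
    ∑ s, ∑ s', (mult t s' : ℝ) * (xFrac t s s' * |pos t s - pos t s'|) = 2 := by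
  simp [Fin.sum_univ_three, xFrac, mult, pos]
  field_simp

end RkMedGap

open RkMedGap

/-- Gap Example 2: for every `t ≥ 2` there is an RkMed instance with `k = 2` and
`m = 4t + 1` on which every feasible integral solution costs at least `t + 1`,
while the natural LP relaxation admits a feasible fractional solution of value `2`;
hence the integrality gap of the natural LP is at least `(t+1)/2`. -/
theorem stmt14 (t : ℕ) (ht : 2 ≤ t) :
    ∃ (α : Type) (F C : Finset α) (d : α → α → ℝ),
      -- d is a pseudometric, positive on distinct facilities
      (∀ p, d p p = 0) ∧ (∀ p q, d p q = d q p) ∧ (∀ p q, 0 ≤ d p q) ∧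
      (∀ p q r, d p r ≤ d p q + d q r) ∧
      Disjoint F C ∧
      (∀ i ∈ F, ∀ i' ∈ F, i ≠ i' → 0 < d i i') ∧
      4 * t + 1 ≤ C.card ∧
      -- every integral solution (k = 2, m = 4t + 1) has cost at least t + 1
      (∀ S : Finset α, S ⊆ F → S.Nonempty → S.card ≤ 2 →
        ∀ Cs : Finset α, Cs ⊆ C → 4 * t + 1 ≤ Cs.card →
          ((t : ℝ) + 1) ≤ ∑ j ∈ Cs, dmin d j S) ∧
      -- the natural LP has a feasible fractional solution of value 2
      (∃ (x : α → α → ℝ) (y : α → ℝ),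
        (∀ i ∈ F, ∀ j ∈ C, 0 ≤ x i j) ∧
        (∀ i ∈ F, 0 ≤ y i) ∧
        (∀ i ∈ F, ∀ j ∈ C, x i j ≤ y i) ∧
        (∀ j ∈ C, ∑ i ∈ F, x i j ≤ 1) ∧
        (∑ i ∈ F, y i ≤ (2 : ℝ)) ∧
        ((4 * (t : ℝ) + 1) ≤ ∑ i ∈ F, ∑ j ∈ C, x i j) ∧
        ∑ i ∈ F, ∑ j ∈ C, x i j * d i j = 2) := by
  have ht₀ : t ≠ 0 := by omega
  refine ⟨Point, facilities, clients t univ, lineDist t, fun _ => by simp [lineDist],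
    fun _ _ => abs_sub_comm _ _, fun _ _ => abs_nonneg _, fun _ _ _ => abs_sub_le _ _ _,
    facilities_disjoint_clients _, fun _ hi _ hi' h => lineDist_pos hi hi' h,
    by rw [card_clients_univ]; omega,
    fun _ hS hne hk _ hCs hm => add_one_le_integral_cost hS hne hk hCs hm,
    fun i j => xFrac t (site i) (site j), fun i => yFrac t (site i),
    fun _ _ _ _ => xFrac_nonneg _ _, fun _ _ => yFrac_nonneg _,
    fun _ _ _ _ => xFrac_le_yFrac _ _,
    fun j _ => (sum_facilities fun s => xFrac t s (site j)).trans_le (sum_xFrac_le_one _),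
    ((sum_facilities _).trans sum_yFrac).le,
    ((sum_facilities_clients _).trans (sum_xFrac_mass ht₀)).ge,
    (sum_facilities_clients _).trans (sum_xFrac_cost ht₀)⟩
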